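/- Let σ ∈ S_n with Mc σ = d₁d₂⋯d_n. If d₁ ≤ d₂ ≤ ⋯ ≤ d_k for some 1 ≤ k ≤ n, then every maximal factor of σ all of whose letters are ≤ k is increasing. -/

import Mathlib

/-- Descent set (ligne of route) of a word, with 1-based positions. -/
def ligne (w : List ℕ) : Finset ℕ :=
  (Finset.Icc 1 (w.length - 1)).filter (fun i => w.getD (i-1) 0 > w.getD i 0)

/-- Major index of a word. -/
def maj (w : List ℕ) : ℕ := ∑ i ∈ ligne w, i

/-- Inversion number of a word. -/
def inv (w : List ℕ) : ℕ :=
  ((Finset.range w.length ×ˢ Finset.range w.length).filter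
    (fun p => p.1 < p.2 ∧ w.getD p.1 0 > w.getD p.2 0)).card

/-- `w` is (the one-line word of) a permutation of `1,…,n`. -/
def IsPermWord (n : ℕ) (w : List ℕ) : Prop := w.Perm (List.range' 1 n)

/-- One-line word of `σ ∈ S_n` with values in `1,…,n`. -/
def toWord {n : ℕ} (σ : Equiv.Perm (Fin n)) : List ℕ := List.ofFn (fun i => (σ i : ℕ) + 1)

/-- Subexcedent word: `0 ≤ d_i ≤ i-1` (1-based), i.e. `d_i ≤ i` for 0-based `i`. -/
def Subexcedent (w : List ℕ) : Prop := ∀ i < w.length, w.getD i 0 ≤ i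

/-- Subdiagonal word: `0 ≤ d_i ≤ n-i` (1-based). -/
def Subdiagonal (w : List ℕ) : Prop := ∀ i < w.length, w.getD i 0 + i + 1 ≤ w.length

/-- Lehmer code: `d_i = #{j < i : x_j > x_i}`. -/
def invcode (w : List ℕ) : List ℕ :=
  (List.range w.length).map (fun i => ((Finset.range i).filter (fun j => w.getD j 0 > w.getD i 0)).card)

/-- `Lc`-code: `d_i = #{j > i : x_i > x_j}`. -/
def lc (w : List ℕ) : List ℕ :=
  (List.range w.length).map (fun i => ((Finset.Ico (i+1) w.length).filter (fun j => w.getD i 0 > w.getD j 0)).card)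

/-- Major index code: `d_i = maj(σ|_i) - maj(σ|_{i-1})`, where `σ|_i` erases letters `> i`. -/
def majcode (w : List ℕ) : List ℕ :=
  (List.range w.length).map (fun i => maj (w.filter (· ≤ i+1)) - maj (w.filter (· ≤ i)))

/-- `Mc`-code: `d_i = maj(σ^{(i)}) - maj(σ^{(i+1)})`, where `σ^{(i)}` erases letters `< i`. -/
def mc (w : List ℕ) : List ℕ :=
  (List.range w.length).map (fun i => maj (w.filter (fun x => i+1 ≤ x)) - maj (w.filter (fun x => i+2 ≤ x)))

/-- One-line word of the inverse permutation. -/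
def invWord (w : List ℕ) : List ℕ :=
  (List.range w.length).map (fun i => w.idxOf (i+1) + 1)

/-- `Ic σ = Lc (σ⁻¹)`. -/
def ic (w : List ℕ) : List ℕ := lc (invWord w)

/-- Inverse ligne of route. -/
def iligne (w : List ℕ) : Finset ℕ := ligne (invWord w)

/-- Complement map `δ` on codes: `δ(d₁⋯d_n) = (0-d₁)(1-d₂)⋯(n-1-d_n)`. -/
def deltaC (w : List ℕ) : List ℕ :=
  (List.range w.length).map (fun i => i - w.getD i 0)

/-- Nondecreasing rearrangement of a word. -/
def sortW (w : List ℕ) : List ℕ := List.insertionSort (· ≤ ·) w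

/-- Set-valued statistic `El = Ligne ∘ Mc⁻¹` on subdiagonal words. -/
noncomputable def El (d : List ℕ) : Finset ℕ := by
  classical
  exact if h : ∃ w, IsPermWord d.length w ∧ mc w = d then ligne h.choose else ∅

/-- Set-valued statistic `Eul = Ligne ∘ Majcode⁻¹` on subexcedent words. -/
noncomputable def Eul (d : List ℕ) : Finset ℕ := by
  classical
  exact if h : ∃ w, IsPermWord d.length w ∧ majcode w = d then ligne h.choose else ∅

/-!
Write `σ⁽ʲ⁾` for `σ` with the letters `< j` erased, so that `d_j = maj σ⁽ʲ⁾ - maj σ⁽ʲ⁺¹⁾`, where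
`σ⁽ʲ⁺¹⁾` is `σ⁽ʲ⁾` with its smallest letter `j` deleted. Suppose a letter `x ≤ k` is followed by a
smaller one in `σ`, and let `c` be the largest `j` for which this still holds in `σ⁽ʲ⁾`. Then
`σ⁽ᶜ⁾ = l x c r` with `r` not starting below `x`, which gives `d_c = |l| + 1 + des r`. Writing
`σ⁽ʲ⁾ = α x β`, the quantity `|α| + des β` does not increase as `j` runs from `c + 1` to `x`
(deleting the smallest letter either shortens `α` or does not raise `des β`), and at `j = x` it
bounds `d_x`. Hence `d_x < d_c` although `c < x ≤ k`.
-/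

def des (w : List ℕ) : ℕ := (ligne w).card

-- Whether position `1` is a descent of `z :: w`, as `0` or `1`.
def headDes : ℕ → List ℕ → ℕ
  | _, [] => 0
  | z, y :: _ => if y < z then 1 else 0

@[simp] lemma headDes_nil (z : ℕ) : headDes z [] = 0 := rfl

@[simp] lemma headDes_cons (z y : ℕ) (w : List ℕ) :
    headDes z (y :: w) = if y < z then 1 else 0 := rfl

lemma headDes_le_one (z : ℕ) (w : List ℕ) : headDes z w ≤ 1 := by
  cases w with
  | nil => simp
  | cons y w => rw [headDes_cons]; split_ifs <;> simp

lemma headDes_append_cons (z : ℕ) (l : List ℕ) (x : ℕ) (X Y : List ℕ) :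
    headDes z (l ++ x :: X) = headDes z (l ++ x :: Y) := by
  cases l <;> rfl

lemma headDes_eq_zero_of_le {m x : ℕ} {r : List ℕ} (hmx : m ≤ x) (hx : headDes x r = 0) :
    headDes m r = 0 := by
  rcases r with _ | ⟨y, r⟩ <;> simp only [headDes_nil, headDes_cons] at hx ⊢
  split_ifs at hx ⊢ <;> omega

lemma headDes_eq_zero_of_forall_le {m : ℕ} {β : List ℕ} (h : ∀ z ∈ β, m ≤ z) :
    headDes m β = 0 := by
  rcases β with _ | ⟨y, β⟩
  · rfl
  · simpa using h y (by simp)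

lemma mem_ligne {w : List ℕ} {i : ℕ} :
    i ∈ ligne w ↔ 1 ≤ i ∧ i ≤ w.length - 1 ∧ w.getD i 0 < w.getD (i - 1) 0 := by
  simp [ligne, and_assoc]

lemma ligne_cons (z : ℕ) (w : List ℕ) :
    ligne (z :: w) = (ligne w).map (addRightEmbedding 1) ∪
      (if headDes z w = 1 then {1} else ∅) := by
  ext i
  rcases i with _ | _ | i <;> rcases w with _ | ⟨y, t⟩ <;> simp [mem_ligne] <;>
    split_ifs <;> simp_all

lemma zero_notMem_ligne (w : List ℕ) : 0 ∉ ligne w := by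
  simp [mem_ligne]

lemma des_cons (z : ℕ) (w : List ℕ) : des (z :: w) = des w + headDes z w := by
  rw [des, ligne_cons, Finset.card_union_of_disjoint, Finset.card_map, des]
  · have := headDes_le_one z w
    split_ifs with h <;> simp <;> omega
  · split_ifs <;> simp [zero_notMem_ligne]

lemma maj_cons (z : ℕ) (w : List ℕ) : maj (z :: w) = maj w + des w + headDes z w := by
  rw [maj, ligne_cons, Finset.sum_union, Finset.sum_map, maj, des]
  · have := headDes_le_one z w
    split_ifs with h <;> simp [Finset.sum_add_distrib] <;> omega
  · split_ifs <;> simp [zero_notMem_ligne]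

lemma des_insert_le (α β : List ℕ) (m : ℕ) : des (α ++ m :: β) ≤ des (α ++ β) + 1 := by
  induction α with
  | nil => simpa [des_cons] using headDes_le_one m β
  | cons z α ih =>
    rcases α with _ | ⟨a, α⟩
    · rcases β with _ | ⟨y, β⟩ <;> simp only [List.cons_append, List.nil_append, des_cons,
        headDes_nil, headDes_cons] <;> split_ifs <;> omega
    · simp only [List.cons_append, des_cons, headDes_cons] at ih ⊢
      omega

lemma des_le_des_insert_min (α β : List ℕ) {m : ℕ} (hα : ∀ z ∈ α, m ≤ z) :
    des (α ++ β) ≤ des (α ++ m :: β) := by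
  induction α with
  | nil => simp [des_cons]
  | cons z α ih =>
    have hmz : m ≤ z := hα z (by simp)
    have := ih (fun y hy => hα y (by simp [hy]))
    rcases α with _ | ⟨a, α⟩
    · have := headDes_le_one z β
      rcases β with _ | ⟨y, β⟩ <;> simp only [List.cons_append, List.nil_append, des_cons,
        headDes_nil, headDes_cons] at this ⊢ <;> split_ifs at this ⊢ <;> omega
    · simp only [List.cons_append, des_cons, headDes_cons] at this ⊢
      omega

lemma maj_insert_min_le (α : List ℕ) {β : List ℕ} {m : ℕ} (hm : headDes m β = 0) :
    maj (α ++ m :: β) ≤ maj (α ++ β) + α.length + des β := by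
  induction α with
  | nil => simp [maj_cons, hm]
  | cons z α ih =>
    have := des_insert_le (z :: α) β m
    simp only [List.cons_append, maj_cons, des_cons, List.length_cons] at this ⊢
    omega

lemma des_insert_min_after (l : List ℕ) {x m : ℕ} {r : List ℕ} (hmx : m < x)
    (hx : headDes x r = 0) : des (l ++ x :: m :: r) = des (l ++ x :: r) + 1 := by
  have hm := headDes_eq_zero_of_le hmx.le hx
  induction l with
  | nil => simp [des_cons, hmx, hm, hx]
  | cons z l ih =>
    simp only [List.cons_append, des_cons, ih, headDes_append_cons z l x (m :: r) r]
    omega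

lemma maj_insert_min_after (l : List ℕ) {x m : ℕ} {r : List ℕ} (hmx : m < x)
    (hx : headDes x r = 0) :
    maj (l ++ x :: m :: r) = maj (l ++ x :: r) + (l.length + 1 + des r) := by
  induction l with
  | nil => simp [maj_cons, des_cons, hmx, hx, headDes_eq_zero_of_le hmx.le hx]; omega
  | cons z l ih =>
    simp only [List.cons_append, maj_cons, ih, des_insert_min_after l hmx hx,
      headDes_append_cons z l x (m :: r) r, List.length_cons]
    omega

namespace IsPermWord

variable {n : ℕ} {w : List ℕ}

lemma mem_iff (hw : IsPermWord n w) {z : ℕ} : z ∈ w ↔ 1 ≤ z ∧ z ≤ n := by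
  rw [List.Perm.mem_iff hw, List.mem_range'_1]
  omega

lemma nodup (hw : IsPermWord n w) : w.Nodup :=
  List.Perm.nodup_iff hw |>.mpr List.nodup_range'

lemma length_eq (hw : IsPermWord n w) : w.length = n := by
  simpa using List.Perm.length_eq hw

end IsPermWord

-- `eraseBelow j σ` is the paper's `σ^{(j)}`.
def eraseBelow (j : ℕ) (w : List ℕ) : List ℕ := w.filter (fun x => j ≤ x)

lemma le_of_mem_eraseBelow {j z : ℕ} {w : List ℕ} (h : z ∈ eraseBelow j w) : j ≤ z := by
  simpa using (List.mem_filter.mp h).2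

lemma mem_eraseBelow {j z : ℕ} {w : List ℕ} : z ∈ eraseBelow j w ↔ z ∈ w ∧ j ≤ z := by
  simp [eraseBelow]

lemma eraseBelow_eraseBelow {i j : ℕ} (hij : i ≤ j) (w : List ℕ) :
    eraseBelow j (eraseBelow i w) = eraseBelow j w := by
  simp only [eraseBelow, List.filter_filter]
  exact List.filter_congr fun z _ => by simp; omega

lemma eraseBelow_eq_self {j : ℕ} {w : List ℕ} (h : ∀ z ∈ w, j ≤ z) : eraseBelow j w = w :=
  List.filter_eq_self.mpr fun z hz => by simpa using h z hz

lemma eraseBelow_succ {j : ℕ} {w α β : List ℕ} (hw : w.Nodup)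
    (h : eraseBelow j w = α ++ j :: β) : eraseBelow (j + 1) w = α ++ β := by
  have hj : j ∉ α ++ β :=
    (List.nodup_cons.mp (List.nodup_middle.mp (h ▸ hw.filter _))).1
  have hgt : ∀ z ∈ α ++ β, j + 1 ≤ z := fun z hz => by
    have : z ∈ eraseBelow j w := by rw [h]; simp at hz ⊢; tauto
    exact (le_of_mem_eraseBelow this).lt_of_ne (by rintro rfl; exact hj hz)
  rw [← eraseBelow_eraseBelow j.le_succ, h, ← eraseBelow_eq_self hgt]
  simp [eraseBelow, List.filter_append]

lemma mc_getD_pred {w : List ℕ} {j : ℕ} (hj : 1 ≤ j) (hjw : j ≤ w.length) :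
    (mc w).getD (j - 1) 0 = maj (eraseBelow j w) - maj (eraseBelow (j + 1) w) := by
  obtain ⟨i, rfl⟩ := Nat.exists_eq_add_of_le' hj
  simp [mc, eraseBelow, List.getD_eq_getElem?_getD, show i < w.length by omega]
  rfl

def IsDescentTop (x : ℕ) (w : List ℕ) : Prop := ∃ l y r, w = l ++ x :: y :: r ∧ y < x

section PermWord

variable {n : ℕ} {w : List ℕ}

lemma IsDescentTop.exists_eraseBelow_eq_min_after {x : ℕ} (hx : IsDescentTop x w)
    (hw : IsPermWord n w) :
    ∃ c l r, 1 ≤ c ∧ c < x ∧ eraseBelow c w = l ++ x :: c :: r ∧ headDes x r = 0 := by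
  classical
  have hone : IsDescentTop x (eraseBelow 1 w) := by
    rwa [eraseBelow_eq_self fun z hz => (hw.mem_iff.mp hz).1]
  have hx1 : 1 ≤ x := by
    obtain ⟨l, y, r, rfl, hyx⟩ := hx
    exact (hw.mem_iff.mp (by simp)).1.trans hyx.le
  set c := Nat.findGreatest (fun j => IsDescentTop x (eraseBelow j w)) x
  have hc1 : 1 ≤ c := Nat.le_findGreatest hx1 hone
  obtain ⟨l, y, r, hc, hyx⟩ : IsDescentTop x (eraseBelow c w) :=
    Nat.findGreatest_spec (P := fun j => IsDescentTop x (eraseBelow j w)) hx1 hone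
  have hcy : c ≤ y := le_of_mem_eraseBelow (by rw [hc]; simp)
  have hmax : ¬ IsDescentTop x (eraseBelow (c + 1) w) :=
    Nat.findGreatest_is_greatest (Nat.lt_succ_self c) (by omega)
  obtain rfl : y = c := by
    by_contra hne
    refine hmax ⟨eraseBelow (c + 1) l, y, eraseBelow (c + 1) r, ?_, hyx⟩
    rw [← eraseBelow_eraseBelow c.le_succ, hc]
    simp [eraseBelow, List.filter_append, show c < x by omega, show c < y by omega]
  refine ⟨c, l, r, hc1, hyx, hc, ?_⟩
  rcases r with _ | ⟨z, r⟩
  · rfl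
  · rw [headDes_cons, if_neg]
    intro hzx
    refine hmax ⟨l, z, r, ?_, hzx⟩
    simpa using eraseBelow_succ hw.nodup (α := l ++ [x]) (by simpa using hc)

lemma exists_eraseBelow_succ_split (hw : IsPermWord n w) {j x : ℕ} {α β : List ℕ}
    (hj : 1 ≤ j) (hjx : j < x) (h : eraseBelow j w = α ++ x :: β) :
    ∃ α' β', eraseBelow (j + 1) w = α' ++ x :: β' ∧ α'.length + des β' ≤ α.length + des β := by
  have hxn : x ≤ n := (hw.mem_iff.mp (mem_eraseBelow.mp (by rw [h]; simp)).1).2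
  have hjmem : j ∈ α ++ x :: β := by
    rw [← h, mem_eraseBelow, hw.mem_iff]
    omega
  have hle : ∀ z ∈ α ++ x :: β, j ≤ z := fun z hz => le_of_mem_eraseBelow (h ▸ hz)
  rcases List.mem_append.mp hjmem with hjα | hjβ
  · obtain ⟨a₁, a₂, rfl⟩ := List.append_of_mem hjα
    refine ⟨a₁ ++ a₂, β, ?_, by simp⟩
    simpa using eraseBelow_succ hw.nodup (α := a₁) (β := a₂ ++ x :: β) (by simpa using h)
  · obtain ⟨b₁, b₂, rfl⟩ := List.append_of_mem ((List.mem_cons.mp hjβ).resolve_left hjx.ne)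
    refine ⟨α, b₁ ++ b₂, ?_, ?_⟩
    · simpa using eraseBelow_succ hw.nodup (α := α ++ x :: b₁) (β := b₂) (by simpa using h)
    · have := des_le_des_insert_min b₁ b₂ fun z hz => hle z (by simp [hz])
      omega

lemma exists_eraseBelow_self_split (hw : IsPermWord n w) {j x : ℕ} {α β : List ℕ}
    (hj : 1 ≤ j) (hjx : j ≤ x) (h : eraseBelow j w = α ++ x :: β) :
    ∃ α' β', eraseBelow x w = α' ++ x :: β' ∧ α'.length + des β' ≤ α.length + des β := by
  induction hd : x - j generalizing j α β with
  | zero =>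
    obtain rfl : j = x := by omega
    exact ⟨α, β, h, le_rfl⟩
  | succ d ih =>
    obtain ⟨α', β', h', hle'⟩ := exists_eraseBelow_succ_split hw hj (by omega) h
    obtain ⟨α'', β'', h'', hle''⟩ := ih (by omega) (by omega) h' (by omega)
    exact ⟨α'', β'', h'', hle''.trans hle'⟩

lemma IsDescentTop.exists_mc_getD_lt {x : ℕ} (hx : IsDescentTop x w) (hw : IsPermWord n w) :
    ∃ c, 1 ≤ c ∧ c < x ∧ (mc w).getD (x - 1) 0 < (mc w).getD (c - 1) 0 := by
  obtain ⟨c, l, r, hc1, hcx, hc, hr⟩ := hx.exists_eraseBelow_eq_min_after hw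
  have hc' : eraseBelow (c + 1) w = l ++ x :: r := by
    simpa using eraseBelow_succ hw.nodup (α := l ++ [x]) (by simpa using hc)
  obtain ⟨α, β, hsplit, hle⟩ := exists_eraseBelow_self_split hw (by omega) hcx hc'
  have hsplit' := eraseBelow_succ hw.nodup hsplit
  have hxn : x ≤ w.length := by
    rw [hw.length_eq]
    exact (hw.mem_iff.mp (mem_eraseBelow.mp (by rw [hsplit]; simp)).1).2
  have hβ : headDes x β = 0 := headDes_eq_zero_of_forall_le fun z hz =>
    Nat.le_of_succ_le (le_of_mem_eraseBelow (by rw [hsplit']; simp [hz]))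
  have hmaj := maj_insert_min_le α hβ
  refine ⟨c, hc1, hcx, ?_⟩
  rw [mc_getD_pred (by omega) hxn, mc_getD_pred hc1 (by omega), hsplit, hsplit', hc, hc',
    maj_insert_min_after l hcx hr]
  omega

end PermWord

theorem stmt12_general (n : ℕ) (w : List ℕ) (hw : IsPermWord n w) (k : ℕ)
    (hmono : ∀ i j : ℕ, i ≤ j → j < k → (mc w).getD i 0 ≤ (mc w).getD j 0) :
    ∀ u : List ℕ, u <:+: w → (∀ x ∈ u, x ≤ k) → u.Pairwise (· < ·) := by
  rintro u ⟨s, t, rfl⟩ hu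
  refine List.isChain_iff_pairwise.mp (List.isChain_iff_forall_rel_of_append_cons_cons.mpr ?_)
  rintro a b l₁ l₂ rfl
  have hab : a ≠ b := by
    simpa using hw.nodup.sublist (l₁ := [a, b]) (List.IsInfix.sublist ⟨s ++ l₁, l₂ ++ t, by simp⟩)
  by_contra hnot
  have hdesc : IsDescentTop a (s ++ (l₁ ++ a :: b :: l₂) ++ t) :=
    ⟨s ++ l₁, b, l₂ ++ t, by simp, lt_of_le_of_ne (not_lt.mp hnot) hab.symm⟩
  obtain ⟨c, hc1, hca, hlt⟩ := hdesc.exists_mc_getD_lt hw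
  have := hmono (c - 1) (a - 1) (by omega) (by have := hu a (by simp); omega)
  omega

theorem stmt12 (n : ℕ) (w : List ℕ) (hw : IsPermWord n w) (k : ℕ)
    (hk1 : 1 ≤ k) (hkn : k ≤ n)
    (hmono : ∀ i j : ℕ, i ≤ j → j < k → (mc w).getD i 0 ≤ (mc w).getD j 0) :
    ∀ u : List ℕ, u <:+: w → (∀ x ∈ u, x ≤ k) → u.Pairwise (· < ·) :=
  stmt12_general n w hw k hmono
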